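/- There are exactly four countably closed clones of Boolean functions of arities 1 ≤ n ≤ ω whose finitary restriction is {x⃗ ↦ ⋀_{i∈S} x_i : S a finite nonempty subset of the arity}, namely: (1) all f : 2^n → 2 (n ≤ ω) such that f^{-1}(1) is a filter containing 1⃗ but not 0⃗; (2) all f as in (1) satisfying additionally f ≤ π_i pointwise for some projection π_i; (3) all f of the form x⃗ ↦ ⋀_{i∈S} x_i for a nonempty (possibly infinite) subset S of the arity; (4) all f of the form x⃗ ↦ ⋀_{i∈S} x_i for a finite nonempty S. Moreover, every clone with this finitary restriction either is one of these four, or lies between ⟨liminf⟩ and clone (1), or lies between ⟨⌈liminf⌉⟩ and clone (2), where ⌈liminf⌉(x₀,x₁,x₂,…) = x₀ ∧ liminf(x₁,x₂,…). -/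

import Mathlib

open scoped Classical

/-- An arity: `some n` is the finite arity `n ≥ 1`; `none` is the countably infinite arity ω. -/
abbrev Arity := Option ℕ+

/-- The index set of an arity. -/
abbrev Idx : Arity → Type
  | some n => Fin (n : ℕ)
  | none => ℕ

/-- A Boolean function of some arity `1 ≤ n ≤ ω`.  The input space `Idx a → Bool`
carries the product topology (with `Bool` discrete), the product σ-algebra (= Borel),
and the coordinatewise partial order. -/
abbrev BFun : Type := Σ a : Arity, (Idx a → Bool) → Bool

/-- A clone: a set of Boolean functions of arities `1 ≤ n ≤ ω` containing all projections
and closed under composition. -/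
structure IsClone (F : Set BFun) : Prop where
  proj : ∀ (a : Arity) (i : Idx a), (⟨a, fun x => x i⟩ : BFun) ∈ F
  comp : ∀ (a b : Arity) (g : (Idx a → Bool) → Bool) (f : Idx a → (Idx b → Bool) → Bool),
      (⟨a, g⟩ : BFun) ∈ F → (∀ i, (⟨b, f i⟩ : BFun) ∈ F) →
      (⟨b, fun x => g fun i => f i x⟩ : BFun) ∈ F

/-- The clone generated by a set of Boolean functions. -/
def cloneGen (G : Set BFun) : Set BFun := ⋂₀ {F : Set BFun | IsClone F ∧ G ⊆ F}

/-- `f` has finite arity. -/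
def finitary (f : BFun) : Prop := f.1 ≠ none

/-- `f` is Borel: the preimage of `1` is a Borel set. -/
def IsBorelFun (f : BFun) : Prop := MeasurableSet {x | f.2 x = true}

/-- `f` is continuous (equivalently, depends on only finitely many coordinates). -/
def IsContFun (f : BFun) : Prop := Continuous f.2

/-- `f(0⃗) = 0`. -/
def PresBot (f : BFun) : Prop := f.2 (fun _ => false) = false

/-- `f(1⃗) = 1`. -/
def PresTop (f : BFun) : Prop := f.2 (fun _ => true) = true

/-- `f` vanishes on a neighborhood of `0⃗`, i.e. `0⃗` is not in the closure of `f⁻¹(1)`. -/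
def VanishNearBot (f : BFun) : Prop := (fun _ => false) ∉ closure {x | f.2 x = true}

/-- `f` equals `1` on a neighborhood of `1⃗`, i.e. `1⃗` is not in the closure of `f⁻¹(0)`. -/
def OneNearTop (f : BFun) : Prop := (fun _ => true) ∉ closure {x | f.2 x = false}

/-- Countably infinite disjunction `⋁ : 2^ω → 2`. -/
noncomputable def bigOr : (ℕ → Bool) → Bool := fun x => decide (∃ i, x i = true)

/-- Countably infinite conjunction `⋀ : 2^ω → 2`. -/
noncomputable def bigAnd : (ℕ → Bool) → Bool := fun x => decide (∀ i, x i = true)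

/-- `liminf : 2^ω → 2`, equal to `1` iff all but finitely many bits are `1`. -/
noncomputable def liminfF : (ℕ → Bool) → Bool := fun x => decide (∃ N, ∀ j, N ≤ j → x j = true)

/-- `A ⊆ 2^ι` is a filter: upward-closed and closed under coordinatewise binary meets. -/
def IsFilterSet {ι : Type} (A : Set (ι → Bool)) : Prop :=
  (∀ x y : ι → Bool, x ≤ y → x ∈ A → y ∈ A) ∧
  (∀ x y : ι → Bool, x ∈ A → y ∈ A → (fun i => x i && y i) ∈ A)

/-- The countable closure of a set of Boolean functions: all `g` agreeing with some member
of `F` (of the same arity) on any countably many given inputs. -/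
def ctblClosure (F : Set BFun) : Set BFun :=
  {g | ∀ x : ℕ → Idx g.1 → Bool, ∃ h : (Idx g.1 → Bool) → Bool,
    (⟨g.1, h⟩ : BFun) ∈ F ∧ ∀ q, h (x q) = g.2 (x q)}

/-- `F` is countably closed. -/
def CtblClosed (F : Set BFun) : Prop := ctblClosure F ⊆ F

/-- The conjunction `x⃗ ↦ ⋀_{i ∈ S} x_i` over a set `S` of coordinates. -/
noncomputable def meetOn {a : Arity} (S : Set (Idx a)) : (Idx a → Bool) → Bool :=
  fun x => decide (∀ i ∈ S, x i = true)

def finRes (F : Set BFun) : Set BFun := {f ∈ F | finitary f}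

/-- (1) All `f` whose `1`-preimage is a filter containing `1⃗` but not `0⃗`. -/
def K1 : Set BFun := {f | IsFilterSet {x | f.2 x = true} ∧ PresTop f ∧ PresBot f}

/-- (2) Those members of `K1` lying below some projection. -/
def K2 : Set BFun := {f ∈ K1 | ∃ i : Idx f.1, ∀ x, f.2 x ≤ x i}

/-- (3) All conjunctions over nonempty (possibly infinite) sets of coordinates. -/
def K3 : Set BFun := {f | ∃ S : Set (Idx f.1), S.Nonempty ∧ f.2 = meetOn S}

/-- (4) All conjunctions over finite nonempty sets of coordinates. -/
def K4 : Set BFun := {f | ∃ S : Set (Idx f.1), S.Nonempty ∧ S.Finite ∧ f.2 = meetOn S}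

/-- The target finitary restriction: finitary conjunctions over (finite) nonempty sets. -/
def TMeet : Set BFun :=
  {f | finitary f ∧ ∃ S : Set (Idx f.1), S.Nonempty ∧ S.Finite ∧ f.2 = meetOn S}

/-- `⌈liminf⌉(x₀,x₁,x₂,…) = x₀ ∧ liminf(x₁,x₂,…)`. -/
noncomputable def ceilLiminfF : (ℕ → Bool) → Bool :=
  fun x => x 0 && liminfF (fun i => x (i + 1))

/- ## Basic helpers -/

lemma meetOn_true {a : Arity} {S : Set (Idx a)} {x : Idx a → Bool} :
    meetOn S x = true ↔ ∀ i ∈ S, x i = true := by simp [meetOn]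

lemma pi_le_iff {ι : Type} {x y : ι → Bool} : x ≤ y ↔ ∀ i, x i = true → y i = true := by
  constructor
  · intro h i hi
    have := h i
    rw [Bool.le_iff_imp] at this
    exact this hi
  · intro h i
    rw [Bool.le_iff_imp]
    exact h i

/-- Meets of lists of elements of a filter containing ⊤ lie in the filter. -/
lemma listAll_mem_filter {ι : Type} {A : Set (ι → Bool)} (hA : IsFilterSet A)
    (htop : (fun _ => true) ∈ A) (l : List ι) (y : ι → ι → Bool)
    (hy : ∀ i ∈ l, y i ∈ A) :
    (fun j => l.all (fun i => y i j)) ∈ A := by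
  induction l with
  | nil => simpa using htop
  | cons i l ih =>
      have h1 : y i ∈ A := hy i (by simp)
      have h2 : (fun j => l.all (fun i => y i j)) ∈ A := ih (fun i hi => hy i (by simp [hi]))
      have := hA.2 _ _ h1 h2
      simpa using this

/-- the binary meet as a BFun -/
abbrev meet2 : BFun := ⟨some 2, fun u => u 0 && u 1⟩

lemma meet2_mem_TMeet : meet2 ∈ TMeet := by
  refine ⟨by simp [finitary, meet2], Set.univ, ⟨0, trivial⟩, Set.finite_univ, ?_⟩
  funext u
  show (u 0 && u 1) = meetOn Set.univ u
  rw [Bool.eq_iff_iff]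
  simp only [meetOn, decide_eq_true_eq, Bool.and_eq_true]
  constructor
  · rintro ⟨h0, h1⟩
    have h2 : ∀ i : Fin 2, u i = true := by rw [Fin.forall_fin_two]; exact ⟨h0, h1⟩
    exact fun i _ => h2 i
  · intro h
    exact ⟨h 0 trivial, h 1 trivial⟩

lemma TMeet_subset_of_finRes {F : Set BFun} (h : finRes F = TMeet) : TMeet ⊆ F := by
  intro f hf
  have : f ∈ finRes F := h ▸ hf
  exact this.1

/-- list meets belong to any clone containing the binary meet -/
lemma listMeet_mem {F : Set BFun} (hF : IsClone F) (hm : meet2 ∈ F) (a : Arity)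
    (l : List (Idx a)) (hl : l ≠ []) :
    (⟨a, fun x => l.all (fun i => x i)⟩ : BFun) ∈ F := by
  induction l with
  | nil => exact absurd rfl hl
  | cons i l ih =>
      rcases eq_or_ne l [] with rfl | hne
      · have hp := hF.proj a i
        have he : (fun x : Idx a → Bool => [i].all (fun j => x j)) = fun x => x i := by
          funext x; simp
        exact he.symm ▸ hp
      · have hrest := ih hne
        have hcomp := hF.comp (some 2) a (fun u => u 0 && u 1)
          ![fun x => x i, fun x => l.all (fun j => x j)]
          hm ?_
        · have he : (fun x : Idx a → Bool => (i :: l).all (fun j => x j))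
              = fun x : Idx a → Bool => (fun u : Idx (some 2) → Bool => u 0 && u 1)
                (fun k => (![fun x : Idx a → Bool => x i,
                  fun x : Idx a → Bool => l.all (fun j => x j)] : _) k x) := by
            funext x
            simp [Matrix.cons_val_zero, Matrix.cons_val_one, Matrix.head_cons]
          exact he.symm ▸ hcomp
        · intro k
          match k with
          | 0 => simpa using hF.proj a i
          | 1 => simpa using hrest

/-- finite nonempty meets belong to any clone containing the binary meet -/
lemma meetOn_finite_mem {F : Set BFun} (hF : IsClone F) (hm : meet2 ∈ F) (a : Arity)
    (S : Set (Idx a)) (hne : S.Nonempty) (hfin : S.Finite) :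
    (⟨a, meetOn S⟩ : BFun) ∈ F := by
  classical
  set l := hfin.toFinset.toList with hl
  have hmem : ∀ i, i ∈ l ↔ i ∈ S := by
    intro i; rw [hl]; simp [Set.Finite.mem_toFinset]
  have hlne : l ≠ [] := by
    rcases hne with ⟨i, hi⟩
    intro h
    have := (hmem i).2 hi
    simp [h] at this
  have hlm := listMeet_mem hF hm a l hlne
  have he : (fun x : Idx a → Bool => l.all (fun i => x i)) = meetOn S := by
    funext x
    rw [Bool.eq_iff_iff]
    simp only [List.all_eq_true, meetOn, decide_eq_true_eq]
    exact ⟨fun h i hi => h i ((hmem i).2 hi), fun h i hi => h i ((hmem i).1 hi)⟩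
  exact he ▸ hlm
/- ## The set of coordinates above which f lies -/

def Sstar {a : Arity} (f : (Idx a → Bool) → Bool) : Set (Idx a) :=
  {i | ∀ x, f x = true → x i = true}

lemma meetOn_mem_K1 {a : Arity} {S : Set (Idx a)} (hne : S.Nonempty) :
    (⟨a, meetOn S⟩ : BFun) ∈ K1 := by
  obtain ⟨i0, hi0⟩ := hne
  refine ⟨⟨?_, ?_⟩, ?_, ?_⟩
  · intro x y hxy hx
    simp only [Set.mem_setOf_eq, meetOn_true] at hx ⊢
    exact fun i hi => pi_le_iff.1 hxy i (hx i hi)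
  · intro x y hx hy
    simp only [Set.mem_setOf_eq, meetOn_true] at hx hy ⊢
    intro i hi
    simp [hx i hi, hy i hi]
  · show meetOn S (fun _ => true) = true
    simp [meetOn]
  · show meetOn S (fun _ => false) = false
    rw [Bool.eq_false_iff, Ne, meetOn_true]
    intro h
    exact absurd (h i0 hi0) (by simp)

/-- Core witness lemma: if `t` is `1` outside a list of coordinates not in `Sstar f`,
then `f t = 1`. -/
lemma f_true_of_one_off_list {a : Arity} {f : (Idx a → Bool) → Bool}
    (hfil : IsFilterSet {x | f x = true}) (htop : f (fun _ => true) = true)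
    (l : List (Idx a)) (hl : ∀ i ∈ l, i ∉ Sstar f)
    (t : Idx a → Bool) (ht : ∀ i, t i = false → i ∈ l) : f t = true := by
  classical
  set y : Idx a → (Idx a → Bool) :=
    fun i => if h : ∃ x, f x = true ∧ x i = false then h.choose else fun _ => true with hy
  have hyl : ∀ i ∈ l, f (y i) = true ∧ y i i = false := by
    intro i hi
    have : ∃ x, f x = true ∧ x i = false := by
      have := hl i hi
      simp only [Sstar, Set.mem_setOf_eq, not_forall] at this
      obtain ⟨x, hx1, hx2⟩ := this
      exact ⟨x, hx1, by simpa using hx2⟩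
    simp only [hy, dif_pos this]
    exact this.choose_spec
  have hz : (fun j => l.all (fun i => y i j)) ∈ {x | f x = true} :=
    listAll_mem_filter hfil htop l y (fun i hi => (hyl i hi).1)
  refine hfil.1 _ t ?_ hz
  rw [pi_le_iff]
  intro j hj
  by_contra htj
  have htj' : t j = false := by simpa using htj
  have hjl := ht j htj'
  rw [List.all_eq_true] at hj
  have := hj j hjl
  rw [(hyl j hjl).2] at this
  exact absurd this (by simp)

/-- every finitary member of K1 is a finite nonempty meet -/
lemma finitary_K1_meet (n : ℕ+) (f : (Idx (some n) → Bool) → Bool)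
    (hfil : IsFilterSet {x | f x = true}) (htop : f (fun _ => true) = true)
    (hbot : f (fun _ => false) = false) :
    (Sstar f).Nonempty ∧ f = meetOn (Sstar f) := by
  classical
  set t : Idx (some n) → Bool := fun j => decide (j ∈ Sstar f) with hts
  have htmem : f t = true := by
    refine f_true_of_one_off_list hfil htop
      ((List.finRange (n : ℕ)).filter (fun i => decide (i ∉ Sstar f))) ?_ t ?_
    · intro i hi
      rw [List.mem_filter] at hi
      simpa using hi.2
    · intro i hti
      rw [List.mem_filter]
      refine ⟨List.mem_finRange i, ?_⟩
      simp only [hts] at hti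
      simpa using hti
  have hne : (Sstar f).Nonempty := by
    rw [Set.nonempty_iff_ne_empty]
    intro h
    have : t = fun _ => false := by
      funext j; simp [hts, h]
    rw [this] at htmem
    rw [htmem] at hbot
    exact absurd hbot (by simp)
  refine ⟨hne, ?_⟩
  funext x
  rw [Bool.eq_iff_iff, meetOn_true]
  constructor
  · intro hx i hi
    exact hi x hx
  · intro hx
    refine hfil.1 t x ?_ htmem
    rw [pi_le_iff]
    intro j hj
    simp only [hts, decide_eq_true_eq] at hj
    exact hx j hj

/-- Lemma A: tails above Sstar are accepted (arity ω). -/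
lemma f_true_tail {f : (ℕ → Bool) → Bool}
    (hfil : IsFilterSet {x | f x = true}) (htop : f (fun _ => true) = true) (n : ℕ) :
    f (fun i => decide (i ∈ Sstar (a := none) f ∨ n ≤ i)) = true := by
  classical
  refine f_true_of_one_off_list (a := none) hfil htop
    ((List.range n).filter (fun i => decide (i ∉ Sstar (a := none) f))) ?_ _ ?_
  · intro i hi
    rw [List.mem_filter] at hi
    simpa using hi.2
  · intro i hti
    simp only [decide_eq_false_iff_not, not_or, not_le] at hti
    rw [List.mem_filter]
    refine ⟨List.mem_range.2 hti.2, by simpa using hti.1⟩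

/-- if `1_{Sstar f}` is accepted then `f` is a meet. -/
lemma f_meet_of_char_Sstar {f : (ℕ → Bool) → Bool}
    (hfil : IsFilterSet {x | f x = true})
    (hchar : f (fun i => decide (i ∈ Sstar (a := none) f)) = true) :
    f = meetOn (Sstar (a := none) f) := by
  funext x
  rw [Bool.eq_iff_iff, meetOn_true]
  constructor
  · intro hx i hi
    exact hi x hx
  · intro hx
    refine hfil.1 _ x ?_ hchar
    rw [pi_le_iff]
    intro j hj
    simp only [decide_eq_true_eq] at hj
    exact hx j hj

/-- Lemma B: a non-meet member of K1 (arity ω) vanishes on finitely supported points. -/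
lemma nonmeet_vanishes {f : (ℕ → Bool) → Bool}
    (hfil : IsFilterSet {x | f x = true}) (htop : f (fun _ => true) = true)
    (hbot : f (fun _ => false) = false)
    (hnm : ∀ S : Set ℕ, S.Nonempty → f ≠ meetOn (a := none) S)
    (p : ℕ → Bool) (hp : {i | p i = true}.Finite) : f p = false := by
  classical
  by_contra hfp'
  have hfp : f p = true := by simpa using hfp'
  set S0 : Set ℕ := {i | p i = true ∧ i ∈ Sstar (a := none) f} with hS0
  set l : List ℕ := hp.toFinset.toList.filter (fun i => decide (i ∉ Sstar (a := none) f))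
    with hldef
  set y : ℕ → (ℕ → Bool) :=
    fun i => if h : ∃ x, f x = true ∧ x i = false then h.choose else fun _ => true with hy
  have hyl : ∀ i ∈ l, f (y i) = true ∧ y i i = false := by
    intro i hi
    rw [hldef, List.mem_filter] at hi
    have hns : i ∉ Sstar (a := none) f := by simpa using hi.2
    have hex : ∃ x, f x = true ∧ x i = false := by
      simp only [Sstar, Set.mem_setOf_eq, not_forall] at hns
      obtain ⟨x, hx1, hx2⟩ := hns
      exact ⟨x, hx1, by simpa using hx2⟩
    simp only [hy, dif_pos hex]
    exact hex.choose_spec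
  have hzmem : (fun j => p j && l.all (fun i => y i j)) ∈ {x | f x = true} :=
    hfil.2 p _ hfp (listAll_mem_filter hfil htop l y (fun i hi => (hyl i hi).1))
  set t : ℕ → Bool := fun j => decide (j ∈ S0) with hts
  have htmem : f t = true := by
    refine hfil.1 _ t ?_ hzmem
    rw [pi_le_iff]
    intro j hj
    simp only [Bool.and_eq_true, List.all_eq_true] at hj
    simp only [hts, decide_eq_true_eq, hS0, Set.mem_setOf_eq]
    refine ⟨hj.1, ?_⟩
    by_contra hns
    have hjl : j ∈ l := by
      rw [hldef, List.mem_filter]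
      refine ⟨by rw [Finset.mem_toList, Set.Finite.mem_toFinset]; exact hj.1, by simpa using hns⟩
    have := hj.2 j hjl
    rw [(hyl j hjl).2] at this
    exact absurd this (by simp)
  have hne : S0.Nonempty := by
    rw [Set.nonempty_iff_ne_empty]
    intro h
    have : t = fun _ => false := by funext j; simp [hts, h]
    rw [this] at htmem
    rw [htmem] at hbot
    exact absurd hbot (by simp)
  refine hnm S0 hne ?_
  funext x
  rw [Bool.eq_iff_iff, meetOn_true]
  constructor
  · intro hx i hi
    exact hi.2 x hx
  · intro hx
    refine hfil.1 t x ?_ htmem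
    rw [pi_le_iff]
    intro j hj
    simp only [hts, decide_eq_true_eq] at hj
    exact hx j hj
/- ## Building bigAnd, liminf, ceilLiminf inside clones -/

lemma bigAnd_mem_of_vanishing {F : Set BFun} (hF : IsClone F) (hm : meet2 ∈ F)
    {f : (ℕ → Bool) → Bool} (hfF : (⟨none, f⟩ : BFun) ∈ F)
    (htop : f (fun _ => true) = true)
    (hvan : ∀ p : ℕ → Bool, {i | p i = true}.Finite → f p = false) :
    (⟨none, bigAnd⟩ : BFun) ∈ F := by
  classical
  set c : ℕ → (ℕ → Bool) → Bool := fun n x => (List.range (n + 1)).all (fun j => x j) with hc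
  have hcF : ∀ n, (⟨none, c n⟩ : BFun) ∈ F := by
    intro n
    exact listMeet_mem hF hm none (List.range (n + 1)) (by intro h; have := congrArg List.length h; simp at this)
  have hcomp := hF.comp none none f c hfF hcF
  have he : bigAnd = fun x => f (fun n => c n x) := by
    funext x
    by_cases hx : ∀ i, x i = true
    · have h1 : (fun n => c n x) = fun _ => true := by
        funext n
        simp only [hc, List.all_eq_true]
        intro j _
        exact hx j
      rw [h1, htop]
      simp [bigAnd, hx]
    · obtain ⟨i0, hi0⟩ : ∃ i0, x i0 = false := by
        push_neg at hx
        obtain ⟨i0, h⟩ := hx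
        exact ⟨i0, by simpa using h⟩
      have hfin : {n | c n x = true}.Finite := by
        refine Set.Finite.subset (Set.finite_Iio i0) ?_
        intro n hn
        simp only [Set.mem_setOf_eq, hc, List.all_eq_true] at hn
        by_contra hlt
        simp only [Set.mem_Iio, not_lt] at hlt
        have := hn i0 (List.mem_range.2 (by omega))
        rw [hi0] at this
        exact absurd this (by simp)
      rw [hvan _ hfin]
      have : ¬ ∀ i, x i = true := hx
      simp [bigAnd, this]
  rw [show (⟨none, bigAnd⟩ : BFun) = ⟨none, fun x => f (fun n => c n x)⟩ from by rw [he]]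
  exact hcomp

/-- ω-ary meets over arbitrary nonempty sets, given bigAnd -/
lemma meetOn_omega_mem {F : Set BFun} (hF : IsClone F) (hA : (⟨none, bigAnd⟩ : BFun) ∈ F)
    (S : Set ℕ) (hne : S.Nonempty) : (⟨none, meetOn (a := none) S⟩ : BFun) ∈ F := by
  classical
  obtain ⟨s0, hs0⟩ := hne
  set σ : ℕ → ℕ := fun n => if n ∈ S then n else s0 with hσ
  have hcomp := hF.comp none none bigAnd (fun n => fun x => x (σ n)) hA
    (fun n => hF.proj none (σ n))
  have he : meetOn (a := none) S = fun x => bigAnd (fun n => x (σ n)) := by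
    funext x
    rw [Bool.eq_iff_iff, meetOn_true]
    simp only [bigAnd, decide_eq_true_eq]
    constructor
    · intro h n
      by_cases hn : n ∈ S
      · simp only [hσ, if_pos hn]; exact h n hn
      · simp only [hσ, if_neg hn]; exact h s0 hs0
    · intro h i hi
      have := h i
      simp only [hσ] at this
      rwa [if_pos hi] at this
  rw [show (⟨none, meetOn (a := none) S⟩ : BFun)
    = ⟨none, fun x => bigAnd (fun n => x (σ n))⟩ from by rw [he]]
  exact hcomp

/-- Case A: a member of `K1` not below any projection yields `liminf`. -/
lemma liminf_mem_of_notK2 {F : Set BFun} (hF : IsClone F) (hm : meet2 ∈ F)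
    {f : (ℕ → Bool) → Bool} (hfF : (⟨none, f⟩ : BFun) ∈ F)
    (hfil : IsFilterSet {x | f x = true}) (htop : f (fun _ => true) = true)
    (hbot : f (fun _ => false) = false)
    (hnK2 : ¬ ∃ i : ℕ, ∀ x, f x ≤ x i) :
    (⟨none, liminfF⟩ : BFun) ∈ F := by
  classical
  have hSe : Sstar (a := none) f = ∅ := by
    rw [Set.eq_empty_iff_forall_notMem]
    intro i hi
    exact hnK2 ⟨i, fun x => Bool.le_iff_imp.2 (fun hx => hi x hx)⟩
  have hnm : ∀ S : Set ℕ, S.Nonempty → f ≠ meetOn (a := none) S := by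
    rintro S ⟨i, hi⟩ hEq
    have : i ∈ Sstar (a := none) f := by
      intro x hx
      rw [hEq, meetOn_true] at hx
      exact hx i hi
    rw [hSe] at this
    exact this
  have hvan := nonmeet_vanishes hfil htop hbot hnm
  have hA := bigAnd_mem_of_vanishing hF hm hfF htop hvan
  have htail : ∀ n : ℕ, f (fun i => decide (n ≤ i)) = true := by
    intro n
    have := f_true_tail hfil htop n
    simpa [hSe] using this
  set c : ℕ → (ℕ → Bool) → Bool := fun n x => bigAnd (fun m => x (n + m)) with hc
  have hcF : ∀ n, (⟨none, c n⟩ : BFun) ∈ F := by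
    intro n
    exact hF.comp none none bigAnd (fun m => fun x => x (n + m)) hA
      (fun m => hF.proj none (n + m))
  have hcomp := hF.comp none none f c hfF hcF
  have he : liminfF = fun x => f (fun n => c n x) := by
    funext x
    by_cases hx : ∃ N, ∀ j, N ≤ j → x j = true
    · obtain ⟨N, hN⟩ := hx
      have harg : f (fun n => c n x) = true := by
        refine hfil.1 (fun i => decide (N ≤ i)) _ ?_ (htail N)
        rw [pi_le_iff]
        intro n hn
        simp only [decide_eq_true_eq] at hn
        simp only [hc, bigAnd, decide_eq_true_eq]
        intro m
        exact hN (n + m) (by omega)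
      rw [harg]
      simp only [liminfF, decide_eq_true_eq]
      exact ⟨N, hN⟩
    · have harg : (fun n => c n x) = fun _ => false := by
        funext n
        push_neg at hx
        obtain ⟨j, hj1, hj2⟩ := hx n
        have hj2' : x j = false := by simpa using hj2
        simp only [hc, bigAnd]
        rw [decide_eq_false_iff_not]
        intro h
        have := h (j - n)
        rw [show n + (j - n) = j from by omega, hj2'] at this
        exact absurd this (by simp)
      rw [harg, hbot]
      simp [liminfF, hx]
  rw [show (⟨none, liminfF⟩ : BFun) = ⟨none, fun x => f (fun n => c n x)⟩ from by rw [he]]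
  exact hcomp

/-- Case B2: a non-meet member of `K2` yields `ceilLiminf`. -/
lemma ceilLiminf_mem_of_nonmeet {F : Set BFun} (hF : IsClone F) (hm : meet2 ∈ F)
    {f : (ℕ → Bool) → Bool} (hfF : (⟨none, f⟩ : BFun) ∈ F)
    (hfil : IsFilterSet {x | f x = true}) (htop : f (fun _ => true) = true)
    (hbot : f (fun _ => false) = false)
    (hK2 : ∃ i : ℕ, ∀ x, f x ≤ x i)
    (hnm : ∀ S : Set ℕ, S.Nonempty → f ≠ meetOn (a := none) S) :
    (⟨none, ceilLiminfF⟩ : BFun) ∈ F := by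
  classical
  obtain ⟨i0, hi0⟩ := hK2
  have hi0S : i0 ∈ Sstar (a := none) f := by
    intro x hx
    have := hi0 x
    rw [Bool.le_iff_imp] at this
    exact this hx
  have hvan := nonmeet_vanishes hfil htop hbot hnm
  have hA := bigAnd_mem_of_vanishing hF hm hfF htop hvan
  have hchar : f (fun i => decide (i ∈ Sstar (a := none) f)) = false := by
    by_contra h
    have h' : f (fun i => decide (i ∈ Sstar (a := none) f)) = true := by simpa using h
    exact hnm _ ⟨i0, hi0S⟩ (f_meet_of_char_Sstar hfil h')
  set c : ℕ → (ℕ → Bool) → Bool := fun i =>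
    if i ∈ Sstar (a := none) f then (fun x => x 0)
    else (fun x => bigAnd (fun m => x (i + m + 1))) with hc
  have hcF : ∀ i, (⟨none, c i⟩ : BFun) ∈ F := by
    intro i
    by_cases hi : i ∈ Sstar (a := none) f
    · simp only [hc, if_pos hi]
      exact hF.proj none 0
    · simp only [hc, if_neg hi]
      exact hF.comp none none bigAnd (fun m => fun x => x (i + m + 1)) hA
        (fun m => hF.proj none (i + m + 1))
  have hcomp := hF.comp none none f c hfF hcF
  have he : ceilLiminfF = fun x => f (fun i => c i x) := by
    funext x
    cases hx0 : x 0 with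
    | false =>
        have harg : f (fun i => c i x) = false := by
          by_contra h
          have h' : f (fun i => c i x) = true := by simpa using h
          have := hi0S _ h'
          simp only [hc, if_pos hi0S] at this
          rw [hx0] at this
          exact absurd this (by simp)
        rw [harg]
        simp [ceilLiminfF, hx0]
    | true =>
        by_cases hl : ∃ N, ∀ j, N ≤ j → x (j + 1) = true
        · obtain ⟨N, hN⟩ := hl
          have harg : f (fun i => c i x) = true := by
            refine hfil.1 (fun i => decide (i ∈ Sstar (a := none) f ∨ N ≤ i)) _ ?_
              (f_true_tail hfil htop N)
            rw [pi_le_iff]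
            intro i hi
            simp only [decide_eq_true_eq] at hi
            by_cases hiS : i ∈ Sstar (a := none) f
            · simp only [hc, if_pos hiS]; exact hx0
            · have hNi : N ≤ i := by tauto
              simp only [hc, if_neg hiS, bigAnd, decide_eq_true_eq]
              intro m
              exact hN (i + m) (by omega)
          rw [harg]
          simp only [ceilLiminfF, hx0, Bool.true_and, liminfF, decide_eq_true_eq]
          exact ⟨N, hN⟩
        · have harg : (fun i => c i x) = fun i => decide (i ∈ Sstar (a := none) f) := by
            funext i
            by_cases hiS : i ∈ Sstar (a := none) f
            · simp only [hc, if_pos hiS, hx0, hiS]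
              simp
            · push_neg at hl
              obtain ⟨j, hj1, hj2⟩ := hl i
              have hj2' : x (j + 1) = false := by simpa using hj2
              have hnall : ¬ ∀ m : ℕ, x (i + m + 1) = true := by
                intro h
                have := h (j - i)
                rw [show i + (j - i) + 1 = j + 1 from by omega, hj2'] at this
                exact absurd this (by simp)
              simp only [hc, if_neg hiS, bigAnd, hiS]
              simp [hnall]
          rw [harg, hchar]
          have : ¬ ∃ N, ∀ j, N ≤ j → x (j + 1) = true := hl
          simp [ceilLiminfF, hx0, liminfF, this]
  rw [show (⟨none, ceilLiminfF⟩ : BFun) = ⟨none, fun x => f (fun i => c i x)⟩ from by rw [he]]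
  exact hcomp
/- ## Every clone whose finitary restriction is TMeet is contained in K1 -/

lemma subst_meet {F : Set BFun} (hF : IsClone F) (hfin : finRes F = TMeet)
    (b : Arity) (f : (Idx b → Bool) → Bool) (hf : (⟨b, f⟩ : BFun) ∈ F)
    (n : ℕ+) (c : Idx b → Idx (some n)) :
    ∃ S : Set (Idx (some n)), S.Nonempty ∧
      (fun u : Idx (some n) → Bool => f (fun i => u (c i))) = meetOn S := by
  have hmem : (⟨some n, fun u => f (fun i => u (c i))⟩ : BFun) ∈ F :=
    hF.comp b (some n) f (fun i => fun u => u (c i)) hf (fun i => hF.proj (some n) (c i))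
  have hT : (⟨some n, fun u => f (fun i => u (c i))⟩ : BFun) ∈ TMeet := by
    rw [← hfin]; exact ⟨hmem, by simp [finitary]⟩
  obtain ⟨-, S, hne, -, hEq⟩ := hT
  exact ⟨S, hne, hEq⟩

lemma clone_subset_K1 {F : Set BFun} (hF : IsClone F) (hfin : finRes F = TMeet) :
    F ⊆ K1 := by
  rintro ⟨b, f⟩ hf
  constructor
  · constructor
    · -- monotonicity
      intro x y hxy hx
      simp only [Set.mem_setOf_eq] at hx ⊢
      set c : Idx b → Idx (some 3) :=
        fun i => ⟨if x i then 2 else if y i then 1 else 0, by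
          have h3 : ((3 : ℕ+) : ℕ) = 3 := rfl
          rw [h3]; split <;> [omega; split <;> omega]⟩
        with hc
      obtain ⟨S, hne, hEq⟩ := subst_meet hF hfin b f hf 3 c
      set ux : Idx (some 3) → Bool := fun k => decide (2 ≤ k.val) with hux
      set uy : Idx (some 3) → Bool := fun k => decide (1 ≤ k.val) with huy
      have hx_eq : (fun i => ux (c i)) = x := by
        funext i
        have hle := pi_le_iff.1 hxy i
        simp only [hux, hc]
        by_cases hxi : x i = true <;> by_cases hyi : y i = true <;> simp_all
      have hy_eq : (fun i => uy (c i)) = y := by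
        funext i
        have hle := pi_le_iff.1 hxy i
        simp only [huy, hc]
        by_cases hxi : x i = true <;> by_cases hyi : y i = true <;> simp_all
      have h1 : meetOn S ux = true := by
        rw [← congrFun hEq ux, hx_eq]; exact hx
      have h2 : meetOn S uy = true := by
        rw [meetOn_true]
        intro i hi
        have := meetOn_true.1 h1 i hi
        simp only [hux, decide_eq_true_eq] at this
        simp only [huy, decide_eq_true_eq]
        omega
      rw [← hy_eq]
      exact (congrFun hEq uy).trans h2
    · -- closed under meets
      intro x y hx hy
      simp only [Set.mem_setOf_eq] at hx hy ⊢
      set c : Idx b → Idx (some 4) :=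
        fun i => ⟨(if x i then 2 else 0) + (if y i then 1 else 0), by
          have h4 : ((4 : ℕ+) : ℕ) = 4 := rfl
          rw [h4]; split <;> split <;> omega⟩
        with hc
      obtain ⟨S, hne, hEq⟩ := subst_meet hF hfin b f hf 4 c
      set ux : Idx (some 4) → Bool := fun k => decide (2 ≤ k.val) with hux
      set uy : Idx (some 4) → Bool := fun k => decide (k.val = 1 ∨ k.val = 3) with huy
      set uxy : Idx (some 4) → Bool := fun k => decide (k.val = 3) with huxy
      have hx_eq : (fun i => ux (c i)) = x := by
        funext i
        simp only [hux, hc]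
        by_cases hxi : x i = true <;> by_cases hyi : y i = true <;> simp_all
      have hy_eq : (fun i => uy (c i)) = y := by
        funext i
        simp only [huy, hc]
        by_cases hxi : x i = true <;> by_cases hyi : y i = true <;> simp_all
      have hxy_eq : (fun i => uxy (c i)) = fun i => x i && y i := by
        funext i
        simp only [huxy, hc]
        by_cases hxi : x i = true <;> by_cases hyi : y i = true <;> simp_all
      have h1 : meetOn S ux = true := by rw [← congrFun hEq ux, hx_eq]; exact hx
      have h2 : meetOn S uy = true := by rw [← congrFun hEq uy, hy_eq]; exact hy
      have h3 : meetOn S uxy = true := by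
        rw [meetOn_true]
        intro i hi
        have e1 := meetOn_true.1 h1 i hi
        have e2 := meetOn_true.1 h2 i hi
        simp only [hux, decide_eq_true_eq] at e1
        simp only [huy, decide_eq_true_eq] at e2
        simp only [huxy, decide_eq_true_eq]
        omega
      rw [← hxy_eq]
      exact (congrFun hEq uxy).trans h3
  · -- PresTop and PresBot
    set c : Idx b → Idx (some 1) := fun _ => ⟨0, by
      have h1 : ((1 : ℕ+) : ℕ) = 1 := rfl
      rw [h1]; omega⟩ with hc
    obtain ⟨S, hne, hEq⟩ := subst_meet hF hfin b f hf 1 c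
    obtain ⟨i0, hi0⟩ := hne
    constructor
    · show f (fun _ => true) = true
      have := congrFun hEq (fun _ => true)
      simp only [meetOn] at this
      rw [show (fun i => (fun _ : Idx (some 1) => true) (c i)) = (fun _ => true) from rfl] at this
      rw [this]
      simp
    · show f (fun _ => false) = false
      have := congrFun hEq (fun _ => false)
      rw [show (fun i => (fun _ : Idx (some 1) => false) (c i)) = (fun _ => false) from rfl] at this
      rw [this]
      rw [Bool.eq_false_iff, Ne, meetOn_true]
      intro h
      exact absurd (h i0 hi0) (by simp)
/- ## K1, K2, K3, K4 are clones -/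

lemma isClone_K1 : IsClone K1 := by
  constructor
  · intro a i
    refine ⟨⟨?_, ?_⟩, rfl, rfl⟩
    · intro x y hxy hx
      exact pi_le_iff.1 hxy i hx
    · intro x y hx hy
      simp only [Set.mem_setOf_eq] at *
      simp [hx, hy]
  · rintro a b g f ⟨⟨hgup, hgmeet⟩, hgtop, hgbot⟩ hfK
    refine ⟨⟨?_, ?_⟩, ?_, ?_⟩
    · intro x y hxy hx
      simp only [Set.mem_setOf_eq] at hx ⊢
      refine hgup _ _ ?_ hx
      rw [pi_le_iff]
      intro i hi
      exact (hfK i).1.1 x y hxy hi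
    · intro x y hx hy
      simp only [Set.mem_setOf_eq] at hx hy ⊢
      have hm := hgmeet _ _ hx hy
      refine hgup _ _ ?_ hm
      rw [pi_le_iff]
      intro i hi
      simp only [Bool.and_eq_true] at hi
      exact (hfK i).1.2 x y hi.1 hi.2
    · show g (fun i => f i (fun _ => true)) = true
      rw [show (fun i => f i (fun _ => true)) = (fun _ => true) from
        funext fun i => (hfK i).2.1]
      exact hgtop
    · show g (fun i => f i (fun _ => false)) = false
      rw [show (fun i => f i (fun _ => false)) = (fun _ => false) from
        funext fun i => (hfK i).2.2]
      exact hgbot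

lemma isClone_K2 : IsClone K2 := by
  constructor
  · intro a i
    exact ⟨isClone_K1.proj a i, i, fun x => le_refl _⟩
  · rintro a b g f hg hfK
    refine ⟨isClone_K1.comp a b g f hg.1 (fun i => (hfK i).1), ?_⟩
    obtain ⟨i0, hi0⟩ := hg.2
    obtain ⟨j0, hj0⟩ := (hfK i0).2
    exact ⟨j0, fun x => le_trans (hi0 _) (hj0 x)⟩

lemma proj_eq_meetOn_singleton {a : Arity} (i : Idx a) :
    (fun x : Idx a → Bool => x i) = meetOn {i} := by
  funext x
  rw [Bool.eq_iff_iff, meetOn_true]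
  simp

lemma isClone_K3 : IsClone K3 := by
  constructor
  · intro a i
    exact ⟨{i}, ⟨i, rfl⟩, proj_eq_meetOn_singleton i⟩
  · rintro a b g f ⟨S, hSne, hSeq⟩ hfK
    choose T hTne hTeq using hfK
    have hSeq' : g = meetOn S := hSeq
    have hTeq' : ∀ i, f i = meetOn (T i) := fun i => hTeq i
    refine ⟨⋃ i ∈ S, T i, ?_, ?_⟩
    · obtain ⟨i, hi⟩ := hSne
      obtain ⟨j, hj⟩ := hTne i
      exact ⟨j, Set.mem_biUnion hi hj⟩
    · funext x
      show g (fun i => f i x) = meetOn (⋃ i ∈ S, T i) x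
      rw [Bool.eq_iff_iff, meetOn_true]
      constructor
      · intro hx j hj
        simp only [Set.mem_iUnion] at hj
        obtain ⟨i, hi, hji⟩ := hj
        rw [hSeq'] at hx
        have := meetOn_true.1 hx i hi
        rw [hTeq' i] at this
        exact meetOn_true.1 this j hji
      · intro hx
        rw [hSeq', meetOn_true]
        intro i hi
        rw [hTeq' i, meetOn_true]
        intro j hj
        exact hx j (Set.mem_biUnion hi hj)

lemma isClone_K4 : IsClone K4 := by
  constructor
  · intro a i
    exact ⟨{i}, ⟨i, rfl⟩, Set.finite_singleton i, proj_eq_meetOn_singleton i⟩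
  · rintro a b g f ⟨S, hSne, hSfin, hSeq⟩ hfK
    choose T hTne hTfin hTeq using hfK
    have hSeq' : g = meetOn S := hSeq
    have hTeq' : ∀ i, f i = meetOn (T i) := fun i => hTeq i
    refine ⟨⋃ i ∈ S, T i, ?_, hSfin.biUnion (fun i _ => hTfin i), ?_⟩
    · obtain ⟨i, hi⟩ := hSne
      obtain ⟨j, hj⟩ := hTne i
      exact ⟨j, Set.mem_biUnion hi hj⟩
    · funext x
      show g (fun i => f i x) = meetOn (⋃ i ∈ S, T i) x
      rw [Bool.eq_iff_iff, meetOn_true]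
      constructor
      · intro hx j hj
        simp only [Set.mem_iUnion] at hj
        obtain ⟨i, hi, hji⟩ := hj
        rw [hSeq'] at hx
        have := meetOn_true.1 hx i hi
        rw [hTeq' i] at this
        exact meetOn_true.1 this j hji
      · intro hx
        rw [hSeq', meetOn_true]
        intro i hi
        rw [hTeq' i, meetOn_true]
        intro j hj
        exact hx j (Set.mem_biUnion hi hj)

/- ## Inclusions and finitary restrictions -/

lemma K2_subset_K1 : K2 ⊆ K1 := fun _ hf => hf.1

lemma K3_subset_K2 : K3 ⊆ K2 := by
  rintro ⟨a, g⟩ ⟨S, hne, hEq⟩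
  have hEq' : g = meetOn S := hEq
  obtain ⟨i, hi⟩ := hne
  refine ⟨?_, i, ?_⟩
  · have := meetOn_mem_K1 (a := a) ⟨i, hi⟩
    rw [show (⟨a, g⟩ : BFun) = ⟨a, meetOn S⟩ from by rw [hEq']]
    exact this
  · intro x
    show g x ≤ x i
    rw [hEq', Bool.le_iff_imp]
    intro hx
    exact meetOn_true.1 hx i hi

lemma K4_subset_K3 : K4 ⊆ K3 := by
  rintro ⟨a, g⟩ ⟨S, hne, _, hEq⟩
  exact ⟨S, hne, hEq⟩

lemma TMeet_subset_K4 : TMeet ⊆ K4 := by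
  rintro ⟨a, g⟩ ⟨_, S, hne, hfin, hEq⟩
  exact ⟨S, hne, hfin, hEq⟩

lemma finRes_K1 : finRes K1 = TMeet := by
  apply Set.Subset.antisymm
  · rintro ⟨a, g⟩ ⟨hK1, hfin⟩
    cases a with
    | none => exact absurd rfl hfin
    | some n =>
        obtain ⟨hne, hEq⟩ := finitary_K1_meet n g hK1.1 hK1.2.1 hK1.2.2
        exact ⟨by simp [finitary], Sstar g, hne, Set.toFinite _, hEq⟩
  · intro f hf
    exact ⟨K2_subset_K1 (K3_subset_K2 (K4_subset_K3 (TMeet_subset_K4 hf))), hf.1⟩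

lemma finRes_of_subsets {C : Set BFun} (h1 : C ⊆ K1) (h2 : TMeet ⊆ C) :
    finRes C = TMeet := by
  ext f
  constructor
  · rintro ⟨hC, hfin⟩
    rw [← finRes_K1]
    exact ⟨h1 hC, hfin⟩
  · intro hf
    exact ⟨h2 hf, hf.1⟩

lemma finRes_K2 : finRes K2 = TMeet :=
  finRes_of_subsets K2_subset_K1 (fun f hf => K3_subset_K2 (K4_subset_K3 (TMeet_subset_K4 hf)))

lemma finRes_K3 : finRes K3 = TMeet :=
  finRes_of_subsets (fun f hf => K2_subset_K1 (K3_subset_K2 hf))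
    (fun f hf => K4_subset_K3 (TMeet_subset_K4 hf))

lemma finRes_K4 : finRes K4 = TMeet :=
  finRes_of_subsets (fun f hf => K2_subset_K1 (K3_subset_K2 (K4_subset_K3 hf)))
    TMeet_subset_K4

/- ## countable closedness -/

lemma ctblClosed_K1 : CtblClosed K1 := by
  rintro ⟨a, g⟩ hg
  refine ⟨⟨?_, ?_⟩, ?_, ?_⟩
  · intro x y hxy hx
    obtain ⟨h, hh, hagree⟩ := hg (fun q => match q with | 0 => x | _ => y)
    have h0 : h x = g x := hagree 0
    have h1 : h y = g y := hagree 1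
    have hx' : g x = true := hx
    have hup : h x = true → h y = true := fun hu => hh.1.1 x y hxy hu
    show g y = true
    rw [← h1]
    exact hup (by rw [h0]; exact hx')
  · intro x y hx hy
    obtain ⟨h, hh, hagree⟩ := hg
      (fun q => match q with | 0 => x | 1 => y | _ => (fun i => x i && y i))
    have h0 : h x = g x := hagree 0
    have h1 : h y = g y := hagree 1
    have h2 : h (fun i => x i && y i) = g (fun i => x i && y i) := hagree 2
    have hx' : g x = true := hx
    have hy' : g y = true := hy
    have hmeet : h x = true → h y = true → h (fun i => x i && y i) = true :=
      fun hu hv => hh.1.2 x y hu hv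
    show g (fun i => x i && y i) = true
    rw [← h2]
    exact hmeet (by rw [h0]; exact hx') (by rw [h1]; exact hy')
  · obtain ⟨h, hh, hagree⟩ := hg (fun _ => (fun _ => true))
    have h0 : h (fun _ => true) = g (fun _ => true) := hagree 0
    show g (fun _ => true) = true
    rw [← h0]
    exact hh.2.1
  · obtain ⟨h, hh, hagree⟩ := hg (fun _ => (fun _ => false))
    have h0 : h (fun _ => false) = g (fun _ => false) := hagree 0
    show g (fun _ => false) = false
    rw [← h0]
    exact hh.2.2

lemma exists_surj_idx (a : Arity) : ∃ e : ℕ → Idx a, Function.Surjective e := by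
  cases a with
  | none => exact ⟨id, fun i => ⟨i, rfl⟩⟩
  | some n =>
      refine ⟨fun k => ⟨k % (n : ℕ), Nat.mod_lt _ n.pos⟩, ?_⟩
      intro i
      refine ⟨i.val, ?_⟩
      have : i.val % (n : ℕ) = i.val := Nat.mod_eq_of_lt i.isLt
      exact Fin.ext this

lemma ctblClosure_mono {F G : Set BFun} (h : F ⊆ G) : ctblClosure F ⊆ ctblClosure G := by
  intro g hg x
  obtain ⟨hfun, h1, h2⟩ := hg x
  exact ⟨hfun, h h1, h2⟩

lemma ctblClosed_K2 : CtblClosed K2 := by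
  rintro ⟨a, g⟩ hg
  refine ⟨ctblClosed_K1 (ctblClosure_mono K2_subset_K1 hg), ?_⟩
  obtain ⟨e, he⟩ := exists_surj_idx a
  by_contra hno
  push_neg at hno
  have hwit : ∀ i : Idx a, ∃ x : Idx a → Bool, g x = true ∧ x i = false := by
    intro i
    obtain ⟨x, hx⟩ := hno i
    have hx' : x i < g x := hx
    rw [Bool.lt_iff] at hx'
    exact ⟨x, hx'.2, hx'.1⟩
  choose w hw1 hw2 using hwit
  obtain ⟨h, hh, hagree⟩ := hg (fun q => w (e q))
  obtain ⟨i, hi⟩ := hh.2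
  obtain ⟨q, hq⟩ := he i
  have hagq : h (w (e q)) = g (w (e q)) := hagree q
  have h1 : h (w (e q)) = true := by rw [hagq]; exact hw1 _
  have h2 : h (w (e q)) ≤ (w (e q)) i := hi (w (e q))
  rw [Bool.le_iff_imp] at h2
  have h3 := h2 h1
  rw [← hq, hw2 (e q)] at h3
  exact absurd h3 (by simp)

noncomputable def chiNe {a : Arity} (i : Idx a) : Idx a → Bool := fun j => decide (j ≠ i)

lemma chi_spec {a : Arity} (T : Set (Idx a)) (i : Idx a) :
    meetOn T (chiNe i) = false ↔ i ∈ T := by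
  show meetOn T (fun j => decide (j ≠ i)) = false ↔ i ∈ T
  constructor
  · intro h
    by_contra hiT
    rw [Bool.eq_false_iff, Ne, meetOn_true] at h
    refine h ?_
    intro j hj
    simp only [decide_eq_true_eq]
    intro hji
    rw [hji] at hj
    exact hiT hj
  · intro hiT
    rw [Bool.eq_false_iff, Ne, meetOn_true]
    intro h
    have := h i hiT
    simp at this

lemma ctblClosed_K3 : CtblClosed K3 := by
  rintro ⟨a, g⟩ hg
  obtain ⟨e, he⟩ := exists_surj_idx a
  set S : Set (Idx a) := {i | g (chiNe i) = false} with hS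
  have key : ∀ x : Idx a → Bool, g x = meetOn S x ∧ S.Nonempty := by
    intro x
    obtain ⟨h, hh, hagree⟩ := hg (fun q => match q with
      | 0 => x | Nat.succ q => chiNe (e q))
    obtain ⟨T, hTne, hTeq⟩ := hh
    have hTeq' : h = meetOn T := hTeq
    have hTS : T = S := by
      ext i
      obtain ⟨q, hq⟩ := he i
      have hag : h (chiNe (e q)) = g (chiNe (e q)) :=
        hagree (q + 1)
      rw [hq] at hag
      rw [← chi_spec T i, ← hTeq', hag]
      exact Iff.rfl
    have h0 : h x = g x := hagree 0
    refine ⟨?_, hTS ▸ hTne⟩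
    rw [← h0, hTeq', hTS]
  obtain ⟨x0⟩ : Nonempty (Idx a → Bool) := ⟨fun _ => true⟩
  refine ⟨S, (key x0).2, funext fun x => (key x).1⟩

lemma ctblClosed_K4 : CtblClosed K4 := by
  rintro ⟨a, g⟩ hg
  obtain ⟨e, he⟩ := exists_surj_idx a
  set S : Set (Idx a) := {i | g (chiNe i) = false} with hS
  have key : ∀ x : Idx a → Bool, g x = meetOn S x ∧ S.Nonempty ∧ S.Finite := by
    intro x
    obtain ⟨h, hh, hagree⟩ := hg (fun q => match q with
      | 0 => x | Nat.succ q => chiNe (e q))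
    obtain ⟨T, hTne, hTfin, hTeq⟩ := hh
    have hTeq' : h = meetOn T := hTeq
    have hTS : T = S := by
      ext i
      obtain ⟨q, hq⟩ := he i
      have hag : h (chiNe (e q)) = g (chiNe (e q)) :=
        hagree (q + 1)
      rw [hq] at hag
      rw [← chi_spec T i, ← hTeq', hag]
      exact Iff.rfl
    have h0 : h x = g x := hagree 0
    exact ⟨by rw [← h0, hTeq', hTS], hTS ▸ hTne, hTS ▸ hTfin⟩
  have k := key (fun _ => true)
  exact ⟨S, k.2.1, k.2.2, funext fun x => (key x).1⟩
/- ## distinguishing functions -/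

lemma liminf_bot : liminfF (fun _ => false) = false := by
  simp only [liminfF, decide_eq_false_iff_not]
  rintro ⟨N, hN⟩
  exact absurd (hN N le_rfl) (by simp)

lemma liminf_mem_K1 : (⟨none, liminfF⟩ : BFun) ∈ K1 := by
  refine ⟨⟨?_, ?_⟩, ?_, ?_⟩
  · intro x y hxy hx
    have hx' : liminfF x = true := hx
    show liminfF y = true
    simp only [liminfF, decide_eq_true_eq] at hx' ⊢
    obtain ⟨N, hN⟩ := hx'
    exact ⟨N, fun j hj => pi_le_iff.1 hxy j (hN j hj)⟩
  · intro x y hx hy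
    have hx' : liminfF x = true := hx
    have hy' : liminfF y = true := hy
    show liminfF (fun i => x i && y i) = true
    simp only [liminfF, decide_eq_true_eq] at hx' hy' ⊢
    obtain ⟨N, hN⟩ := hx'
    obtain ⟨M, hM⟩ := hy'
    exact ⟨max N M, fun j hj => by
      rw [hN j (le_trans (le_max_left _ _) hj), hM j (le_trans (le_max_right _ _) hj)]
      rfl⟩
  · show liminfF (fun _ => true) = true
    simp [liminfF]
  · exact liminf_bot

lemma liminf_not_K2 : (⟨none, liminfF⟩ : BFun) ∉ K2 := by
  rintro ⟨-, i, hi⟩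
  have h1 : liminfF (chiNe i) = true := by
    simp only [liminfF, decide_eq_true_eq]
    refine ⟨i + 1, fun j hj => ?_⟩
    have hne : j ≠ i := ne_of_gt (show i < j from hj)
    simp [chiNe, hne]
  have h2 := hi (chiNe i)
  rw [Bool.le_iff_imp] at h2
  have h3 := h2 h1
  simp [chiNe] at h3

lemma liminf_not_K3 : (⟨none, liminfF⟩ : BFun) ∉ K3 := by
  rintro ⟨S, ⟨i, hi⟩, hEq⟩
  have hEq' : liminfF = meetOn (a := none) S := hEq
  have h1 : liminfF (chiNe i) = true := by
    simp only [liminfF, decide_eq_true_eq]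
    refine ⟨i + 1, fun j hj => ?_⟩
    have hne : j ≠ i := ne_of_gt (show i < j from hj)
    simp [chiNe, hne]
  have h2 : meetOn (a := none) S (chiNe i) = false :=
    (chi_spec S i).2 hi
  rw [hEq', h2] at h1
  exact absurd h1 (by simp)

lemma ceilLiminf_mem_K2 : (⟨none, ceilLiminfF⟩ : BFun) ∈ K2 := by
  refine ⟨⟨⟨?_, ?_⟩, ?_, ?_⟩, 0, ?_⟩
  · intro x y hxy hx
    have hx' : ceilLiminfF x = true := hx
    show ceilLiminfF y = true
    simp only [ceilLiminfF, Bool.and_eq_true, liminfF, decide_eq_true_eq] at hx' ⊢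
    obtain ⟨h0, N, hN⟩ := hx'
    exact ⟨pi_le_iff.1 hxy 0 h0, N, fun j hj => pi_le_iff.1 hxy (j + 1) (hN j hj)⟩
  · intro x y hx hy
    have hx' : ceilLiminfF x = true := hx
    have hy' : ceilLiminfF y = true := hy
    show ceilLiminfF (fun i => x i && y i) = true
    simp only [ceilLiminfF, Bool.and_eq_true, liminfF, decide_eq_true_eq] at hx' hy' ⊢
    obtain ⟨hx0, N, hN⟩ := hx'
    obtain ⟨hy0, M, hM⟩ := hy'
    exact ⟨⟨hx0, hy0⟩, max N M, fun j hj => by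
      rw [hN j (le_trans (le_max_left _ _) hj), hM j (le_trans (le_max_right _ _) hj)]
      exact ⟨rfl, rfl⟩⟩
  · show ceilLiminfF (fun _ => true) = true
    simp [ceilLiminfF, liminfF]
  · show ceilLiminfF (fun _ => false) = false
    simp [ceilLiminfF]
  · intro x
    show ceilLiminfF x ≤ x 0
    rw [Bool.le_iff_imp]
    intro hx
    simp only [ceilLiminfF, Bool.and_eq_true] at hx
    exact hx.1

lemma ceilLiminf_not_K3 : (⟨none, ceilLiminfF⟩ : BFun) ∉ K3 := by
  rintro ⟨S, hne, hEq⟩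
  have hEq' : ceilLiminfF = meetOn (a := none) S := hEq
  by_cases hex : ∃ i ∈ S, i ≠ 0
  · obtain ⟨i, hiS, hi0⟩ := hex
    have h1 : ceilLiminfF (chiNe i) = true := by
      simp only [ceilLiminfF, Bool.and_eq_true, liminfF, decide_eq_true_eq]
      refine ⟨by simp [chiNe, Ne.symm hi0], i, fun j hj => ?_⟩
      have hne : j + 1 ≠ i := by
        intro h
        rw [← h] at hj
        exact absurd (show j < j + 1 from Nat.lt_succ_self j) (not_lt.2 hj)
      simp [chiNe, hne]
    have h2 : meetOn (a := none) S (chiNe i) = false :=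
      (chi_spec S i).2 hiS
    rw [hEq', h2] at h1
    exact absurd h1 (by simp)
  · push_neg at hex
    obtain ⟨i0, hi0⟩ := hne
    have hS0 : i0 = 0 := hex i0 hi0
    have h1 : ceilLiminfF (fun j => decide (j = 0)) = false := by
      have hsh : (fun i : ℕ => decide ((i + 1) = 0)) = (fun _ : ℕ => false) := by
        funext i; simp
      have hl : liminfF (fun i => decide ((i + 1) = 0)) = false := by
        rw [hsh]; exact liminf_bot
      have hb : ceilLiminfF (fun j => decide (j = 0))
          = ((fun j : ℕ => decide (j = 0)) 0 && liminfF (fun i => decide ((i + 1) = 0))) :=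
        rfl
      rw [hb, hl, Bool.and_false]
    have h2 : meetOn (a := none) S (fun j => decide (j = 0)) = true := by
      rw [meetOn_true]
      intro j hj
      have := hex j hj
      simp [this]
    rw [hEq', h2] at h1
    exact absurd h1 (by simp)

lemma bigAnd_mem_K3 : (⟨none, bigAnd⟩ : BFun) ∈ K3 := by
  refine ⟨Set.univ, ⟨0, trivial⟩, ?_⟩
  funext x
  show bigAnd x = meetOn Set.univ x
  rw [Bool.eq_iff_iff, meetOn_true]
  simp [bigAnd]

lemma bigAnd_not_K4 : (⟨none, bigAnd⟩ : BFun) ∉ K4 := by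
  rintro ⟨S, hne, hfin, hEq⟩
  have hEq' : bigAnd = meetOn (a := none) S := hEq
  obtain ⟨i, hi⟩ := hfin.infinite_compl.nonempty
  have h1 : bigAnd (chiNe i) = false := by
    simp only [bigAnd, chiNe, decide_eq_false_iff_not]
    refine decide_eq_false (fun h => ?_)
    have := h i
    simp at this
  have h2 : meetOn (a := none) S (chiNe i) = true := by
    rw [meetOn_true]
    intro j hj
    have : j ≠ i := fun hji => hi (hji ▸ hj)
    simp [chiNe, this]
  rw [hEq', h2] at h1
  exact absurd h1 (by simp)

lemma K_distinct : K1 ≠ K2 ∧ K1 ≠ K3 ∧ K1 ≠ K4 ∧ K2 ≠ K3 ∧ K2 ≠ K4 ∧ K3 ≠ K4 := by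
  have l4 : (⟨none, liminfF⟩ : BFun) ∉ K4 := fun h => liminf_not_K3 (K4_subset_K3 h)
  have c4 : (⟨none, ceilLiminfF⟩ : BFun) ∉ K4 := fun h => ceilLiminf_not_K3 (K4_subset_K3 h)
  have l2' : (⟨none, liminfF⟩ : BFun) ∉ K3 := liminf_not_K3
  refine ⟨?_, ?_, ?_, ?_, ?_, ?_⟩
  · exact fun h => liminf_not_K2 (h ▸ liminf_mem_K1)
  · exact fun h => liminf_not_K3 (h ▸ liminf_mem_K1)
  · exact fun h => l4 (h ▸ liminf_mem_K1)
  · exact fun h => ceilLiminf_not_K3 (h ▸ ceilLiminf_mem_K2)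
  · exact fun h => c4 (h ▸ ceilLiminf_mem_K2)
  · exact fun h => bigAnd_not_K4 (h ▸ bigAnd_mem_K3)
/- ## vanishing of liminf / ceilLiminf on finitely supported points -/

lemma liminf_vanish (p : ℕ → Bool) (hp : {i | p i = true}.Finite) : liminfF p = false := by
  obtain ⟨b, hb⟩ := hp.bddAbove
  rw [liminfF, decide_eq_false_iff_not]
  rintro ⟨N, hN⟩
  have h1 : p (max N (b + 1)) = true := hN _ (le_max_left _ _)
  have h2 : max N (b + 1) ≤ b := hb h1
  have := le_max_right N (b + 1)
  omega

lemma ceilLiminf_vanish (p : ℕ → Bool) (hp : {i | p i = true}.Finite) :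
    ceilLiminfF p = false := by
  have htail : {i | p (i + 1) = true}.Finite := by
    have : {i | p (i + 1) = true} ⊆ (fun i => i + 1) ⁻¹' {i | p i = true} := fun i hi => hi
    exact Set.Finite.subset (hp.preimage (fun a _ c _ h => by omega)) this
  rw [ceilLiminfF, liminf_vanish _ htail, Bool.and_false]

/- ## the sequence of partial meets used for countable closure arguments -/

def Sseq (g : (ℕ → Bool) → Bool) (x : ℕ → ℕ → Bool) (n : ℕ) : Set ℕ :=
  {i | ∀ q ≤ n, g (x q) = true → x q i = true}

section Sseq
variable {g : (ℕ → Bool) → Bool} {x : ℕ → ℕ → Bool}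

lemma g_mSeq (hfil : IsFilterSet {z | g z = true}) (htop : g (fun _ => true) = true) :
    ∀ n, g (fun i => decide (i ∈ Sseq g x n)) = true := by
  intro n
  induction n with
  | zero =>
      have hmem : ∀ i, i ∈ Sseq g x 0 ↔ (g (x 0) = true → x 0 i = true) := by
        intro i
        constructor
        · intro h; exact h 0 le_rfl
        · intro h q hq
          rw [Nat.le_zero] at hq
          rw [hq]; exact h
      by_cases h0 : g (x 0) = true
      · have he : (fun i => decide (i ∈ Sseq g x 0)) = x 0 := by
          funext i
          rw [Bool.eq_iff_iff, decide_eq_true_eq, hmem i]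
          simp [h0]
        rw [he]; exact h0
      · have he : (fun i => decide (i ∈ Sseq g x 0)) = fun _ => true := by
          funext i
          rw [show decide (i ∈ Sseq g x 0) = true from ?_]
          rw [decide_eq_true_eq, hmem i]
          intro hh
          exact absurd hh h0
        rw [he]; exact htop
  | succ n ih =>
      have hmem : ∀ i, i ∈ Sseq g x (n + 1) ↔
          (i ∈ Sseq g x n ∧ (g (x (n + 1)) = true → x (n + 1) i = true)) := by
        intro i
        constructor
        · intro h
          exact ⟨fun q hq hg => h q (le_trans hq (Nat.le_succ n)) hg, h (n + 1) le_rfl⟩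
        · rintro ⟨h1, h2⟩ q hq hg
          rcases Nat.le_succ_iff.1 hq with hq' | hq'
          · exact h1 q hq' hg
          · rw [hq']; rw [hq'] at hg; exact h2 hg
      by_cases hg : g (x (n + 1)) = true
      · have he : (fun i => decide (i ∈ Sseq g x (n + 1)))
            = fun i => (decide (i ∈ Sseq g x n)) && x (n + 1) i := by
          funext i
          rw [Bool.eq_iff_iff, decide_eq_true_eq, hmem i]
          simp only [Bool.and_eq_true, decide_eq_true_eq, hg, true_implies]
        rw [he]
        exact hfil.2 _ _ ih hg
      · have he : (fun i => decide (i ∈ Sseq g x (n + 1)))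
            = fun i => decide (i ∈ Sseq g x n) := by
          funext i
          rw [Bool.eq_iff_iff, decide_eq_true_eq, decide_eq_true_eq, hmem i]
          constructor
          · exact fun h => h.1
          · exact fun h => ⟨h, fun hgg => absurd hgg hg⟩
        rw [he]
        exact ih

lemma Sseq_ne (hfil : IsFilterSet {z | g z = true}) (htop : g (fun _ => true) = true)
    (hbot : g (fun _ => false) = false) (n : ℕ) : (Sseq g x n).Nonempty := by
  rw [Set.nonempty_iff_ne_empty]
  intro hemp
  have := g_mSeq (g := g) (x := x) hfil htop n
  
  rw [show (fun i => decide (i ∈ Sseq g x n)) = fun _ => false from ?_] at this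
  · rw [this] at hbot; exact absurd hbot (by simp)
  · funext i
    rw [hemp]
    simp

lemma meetOn_Sseq_true {q n : ℕ} (hqn : q ≤ n) (hgq : g (x q) = true) :
    meetOn (a := none) (Sseq g x n) (x q) = true := by
  rw [meetOn_true]
  intro i hi
  exact hi q hqn hgq

lemma meetOn_Sseq_false (hfil : IsFilterSet {z | g z = true})
    (htop : g (fun _ => true) = true) {q n : ℕ} (hgq : g (x q) = false) :
    meetOn (a := none) (Sseq g x n) (x q) = false := by
  by_contra h
  have h' : meetOn (a := none) (Sseq g x n) (x q) = true := by simpa using h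
  rw [meetOn_true] at h'
  have hup := hfil.1 (fun i => decide (i ∈ Sseq g x n)) (x q) ?_
    (g_mSeq hfil htop n)
  · rw [Set.mem_setOf_eq, hgq] at hup
    exact absurd hup (by simp)
  · rw [pi_le_iff]
    intro i hi
    rw [decide_eq_true_eq] at hi
    exact h' i hi

end Sseq

/- ## F = K3 and F = K4 in the all-meets cases -/

lemma meetOn_from_infinite {F : Set BFun} (hF : IsClone F)
    (S : Set ℕ) (hSinf : S.Infinite) (hSF : (⟨none, meetOn (a := none) S⟩ : BFun) ∈ F)
    (S' : Set ℕ) (hne : S'.Nonempty) : (⟨none, meetOn (a := none) S'⟩ : BFun) ∈ F := by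
  classical
  obtain ⟨s0, hs0⟩ := hne
  set σ : ℕ → ℕ := fun i =>
    if Nat.count (· ∈ S) i ∈ S' then Nat.count (· ∈ S) i else s0 with hσ
  have hcomp := hF.comp none none (meetOn (a := none) S) (fun i => fun x => x (σ i)) hSF
    (fun i => hF.proj none (σ i))
  have he : meetOn (a := none) S' = fun x => meetOn (a := none) S (fun i => x (σ i)) := by
    funext x
    rw [Bool.eq_iff_iff, meetOn_true]
    constructor
    · intro h
      show meetOn (a := none) S (fun i => x (σ i)) = true
      rw [meetOn_true]
      intro i _
      by_cases hk : Nat.count (· ∈ S) i ∈ S'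
      · simp only [hσ, if_pos hk]; exact h _ hk
      · simp only [hσ, if_neg hk]; exact h _ hs0
    · intro h j hj
      have h' : meetOn (a := none) S (fun i => x (σ i)) = true := h
      rw [meetOn_true] at h'
      have hmem : Nat.nth (· ∈ S) j ∈ S := Nat.nth_mem_of_infinite hSinf j
      have hcount : Nat.count (· ∈ S) (Nat.nth (· ∈ S) j) = j :=
        Nat.count_nth_of_infinite (p := (· ∈ S)) hSinf j
      have := h' _ hmem
      simp only [hσ, hcount, if_pos hj] at this
      exact this
  rw [show (⟨none, meetOn (a := none) S'⟩ : BFun)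
    = ⟨none, fun x => meetOn (a := none) S (fun i => x (σ i))⟩ from by rw [he]]
  exact hcomp

lemma F_eq_K3 {F : Set BFun} (hF : IsClone F) (hfin : finRes F = TMeet)
    (hAll : ∀ f ∈ F, f ∈ K3)
    (hInf : ∃ S : Set ℕ, S.Infinite ∧ (⟨none, meetOn (a := none) S⟩ : BFun) ∈ F) :
    F = K3 := by
  obtain ⟨S, hSinf, hSF⟩ := hInf
  apply Set.Subset.antisymm hAll
  rintro ⟨a, g⟩ ⟨S', hne, hEq⟩
  have hEq' : g = meetOn S' := hEq
  cases a with
  | some n =>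
      exact TMeet_subset_of_finRes hfin ⟨by simp [finitary], S', hne, Set.toFinite _, hEq'⟩
  | none =>
      have := meetOn_from_infinite hF S hSinf hSF S' hne
      rw [show (⟨none, g⟩ : BFun) = ⟨none, meetOn (a := none) S'⟩ from by rw [hEq']]
      exact this

lemma F_eq_K4 {F : Set BFun} (hF : IsClone F) (hfin : finRes F = TMeet)
    (hAll : ∀ f ∈ F, f ∈ K3)
    (hInf : ¬ ∃ S : Set ℕ, S.Infinite ∧ (⟨none, meetOn (a := none) S⟩ : BFun) ∈ F) :
    F = K4 := by
  have hm : meet2 ∈ F := TMeet_subset_of_finRes hfin meet2_mem_TMeet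
  apply Set.Subset.antisymm
  · rintro ⟨a, g⟩ hgF
    obtain ⟨S', hne, hEq⟩ := hAll _ hgF
    have hEq' : g = meetOn S' := hEq
    cases a with
    | some n => exact ⟨S', hne, Set.toFinite _, hEq⟩
    | none =>
        refine ⟨S', hne, ?_, hEq⟩
        by_contra hSfin
        refine hInf ⟨S', hSfin, ?_⟩
        rw [show (⟨none, meetOn (a := none) S'⟩ : BFun) = ⟨none, g⟩ from by rw [hEq']]
        exact hgF
  · rintro ⟨a, g⟩ ⟨S', hne, hfinS, hEq⟩
    have hEq' : g = meetOn S' := hEq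
    cases a with
    | some n =>
        exact TMeet_subset_of_finRes hfin ⟨by simp [finitary], S', hne, hfinS, hEq'⟩
    | none =>
        have := meetOn_finite_mem hF hm none S' hne hfinS
        rw [show (⟨none, g⟩ : BFun) = ⟨none, meetOn (a := none) S'⟩ from by rw [hEq']]
        exact this

/- ## F = K1 and F = K2 in the countably closed cases -/

lemma F_eq_K1 {F : Set BFun} (hF : IsClone F) (hfin : finRes F = TMeet)
    (hCC : CtblClosed F) (hlim : (⟨none, liminfF⟩ : BFun) ∈ F) (hsub : F ⊆ K1) :
    F = K1 := by
  have hm : meet2 ∈ F := TMeet_subset_of_finRes hfin meet2_mem_TMeet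
  have hA : (⟨none, bigAnd⟩ : BFun) ∈ F :=
    bigAnd_mem_of_vanishing hF hm hlim (by simp [liminfF]) liminf_vanish
  apply Set.Subset.antisymm hsub
  rintro ⟨a, g⟩ hgK1
  cases a with
  | some n =>
      refine TMeet_subset_of_finRes hfin ?_
      rw [← finRes_K1]
      exact ⟨hgK1, by simp [finitary]⟩
  | none =>
      apply hCC
      intro x
      have hfil : IsFilterSet {z | g z = true} := hgK1.1
      have htop : g (fun _ => true) = true := hgK1.2.1
      have hbot : g (fun _ => false) = false := hgK1.2.2
      refine ⟨fun y => liminfF (fun n => meetOn (a := none) (Sseq g x n) y), ?_, ?_⟩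
      · exact hF.comp none none liminfF (fun n => meetOn (a := none) (Sseq g x n)) hlim
          (fun n => meetOn_omega_mem hF hA _ (Sseq_ne hfil htop hbot n))
      · intro q
        show liminfF (fun n => meetOn (a := none) (Sseq g x n) (x q)) = g (x q)
        by_cases hgq : g (x q) = true
        · rw [hgq]
          simp only [liminfF, decide_eq_true_eq]
          exact ⟨q, fun n hn => meetOn_Sseq_true hn hgq⟩
        · have hgq' : g (x q) = false := by simpa using hgq
          rw [hgq']
          rw [show (fun n => meetOn (a := none) (Sseq g x n) (x q)) = fun _ => false from
            funext fun n => meetOn_Sseq_false hfil htop hgq']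
          exact liminf_bot

lemma F_eq_K2 {F : Set BFun} (hF : IsClone F) (hfin : finRes F = TMeet)
    (hCC : CtblClosed F) (hceil : (⟨none, ceilLiminfF⟩ : BFun) ∈ F)
    (hA : (⟨none, bigAnd⟩ : BFun) ∈ F) (hsub : F ⊆ K2) :
    F = K2 := by
  apply Set.Subset.antisymm hsub
  rintro ⟨a, g⟩ hgK2
  cases a with
  | some n =>
      refine TMeet_subset_of_finRes hfin ?_
      rw [← finRes_K2]
      exact ⟨hgK2, by simp [finitary]⟩
  | none =>
      apply hCC
      intro x
      have hgK1 := hgK2.1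
      obtain ⟨i0, hi0⟩ := hgK2.2
      have hfil : IsFilterSet {z | g z = true} := hgK1.1
      have htop : g (fun _ => true) = true := hgK1.2.1
      have hbot : g (fun _ => false) = false := hgK1.2.2
      set c : ℕ → (ℕ → Bool) → Bool := fun k => match k with
        | 0 => fun y => y i0
        | Nat.succ n => fun y => meetOn (a := none) (Sseq g x n) y with hc
      refine ⟨fun y => ceilLiminfF (fun k => c k y), ?_, ?_⟩
      · refine hF.comp none none ceilLiminfF c hceil ?_
        intro k
        match k with
        | 0 => exact hF.proj none i0
        | Nat.succ n => exact meetOn_omega_mem hF hA _ (Sseq_ne hfil htop hbot n)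
      · intro q
        show ceilLiminfF (fun k => c k (x q)) = g (x q)
        have hred : ceilLiminfF (fun k => c k (x q))
            = (x q i0 && liminfF (fun n => meetOn (a := none) (Sseq g x n) (x q))) := rfl
        rw [hred]
        by_cases hgq : g (x q) = true
        · rw [hgq]
          have h0 : x q i0 = true := by
            have := hi0 (x q)
            rw [Bool.le_iff_imp] at this
            exact this hgq
          rw [h0, Bool.true_and]
          simp only [liminfF, decide_eq_true_eq]
          exact ⟨q, fun n hn => meetOn_Sseq_true hn hgq⟩
        · have hgq' : g (x q) = false := by simpa using hgq
          rw [hgq']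
          rw [show (fun n => meetOn (a := none) (Sseq g x n) (x q)) = fun _ => false from
            funext fun n => meetOn_Sseq_false hfil htop hgq']
          rw [liminf_bot, Bool.and_false]

/- ## the master classification -/

lemma cloneGen_singleton_subset {F : Set BFun} (hF : IsClone F) {f : BFun} (hf : f ∈ F) :
    cloneGen {f} ⊆ F :=
  fun x hx => hx F ⟨hF, Set.singleton_subset_iff.2 hf⟩

lemma classify {F : Set BFun} (hF : IsClone F) (hfin : finRes F = TMeet) :
    (F = K3) ∨ (F = K4) ∨
    ((⟨none, liminfF⟩ : BFun) ∈ F ∧ F ⊆ K1) ∨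
    ((⟨none, ceilLiminfF⟩ : BFun) ∈ F ∧ F ⊆ K2 ∧ (⟨none, bigAnd⟩ : BFun) ∈ F) := by
  have hm : meet2 ∈ F := TMeet_subset_of_finRes hfin meet2_mem_TMeet
  have hsub := clone_subset_K1 hF hfin
  by_cases hcaseA : ∃ f ∈ F, f ∉ K2
  · obtain ⟨⟨b, f⟩, hfF, hfK2⟩ := hcaseA
    cases b with
    | some n =>
        exfalso
        apply hfK2
        have hT : (⟨some n, f⟩ : BFun) ∈ TMeet := by
          rw [← hfin]; exact ⟨hfF, by simp [finitary]⟩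
        exact K3_subset_K2 (K4_subset_K3 (TMeet_subset_K4 hT))
    | none =>
        have hfK1 := hsub hfF
        have hnK2 : ¬ ∃ i : ℕ, ∀ x, f x ≤ x i := by
          rintro ⟨i, hi⟩
          exact hfK2 ⟨hfK1, i, hi⟩
        right; right; left
        exact ⟨liminf_mem_of_notK2 hF hm hfF hfK1.1 hfK1.2.1 hfK1.2.2 hnK2, hsub⟩
  · push_neg at hcaseA
    by_cases hAll : ∀ f ∈ F, f ∈ K3
    · by_cases hInf : ∃ S : Set ℕ, S.Infinite ∧ (⟨none, meetOn (a := none) S⟩ : BFun) ∈ F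
      · left; exact F_eq_K3 hF hfin hAll hInf
      · right; left; exact F_eq_K4 hF hfin hAll hInf
    · push_neg at hAll
      obtain ⟨⟨b, f⟩, hfF, hfK3⟩ := hAll
      cases b with
      | some n =>
          exfalso
          apply hfK3
          have hT : (⟨some n, f⟩ : BFun) ∈ TMeet := by
            rw [← hfin]; exact ⟨hfF, by simp [finitary]⟩
          exact K4_subset_K3 (TMeet_subset_K4 hT)
      | none =>
          have hfK2' := hcaseA _ hfF
          have hfK1 := hfK2'.1
          obtain ⟨i0, hi0⟩ := hfK2'.2
          have hnm : ∀ S : Set ℕ, S.Nonempty → f ≠ meetOn (a := none) S := by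
            intro S hne hEq
            exact hfK3 ⟨S, hne, hEq⟩
          right; right; right
          refine ⟨ceilLiminf_mem_of_nonmeet hF hm hfF hfK1.1 hfK1.2.1 hfK1.2.2
            ⟨i0, hi0⟩ hnm, fun f hf => hcaseA f hf, ?_⟩
          exact bigAnd_mem_of_vanishing hF hm hfF hfK1.2.1
            (nonmeet_vanishes hfK1.1 hfK1.2.1 hfK1.2.2 hnm)
/-- There are exactly four countably closed clones whose finitary restriction consists of
the finitary nonempty conjunctions; moreover every clone with this finitary restriction
either is one of these four, or lies between `⟨liminf⟩` and `K1`, or between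
`⟨⌈liminf⌉⟩` and `K2`. -/
theorem ctbly_closed_clones_over_Meet :
    (∀ C ∈ [K1, K2, K3, K4], IsClone C ∧ CtblClosed C ∧ finRes C = TMeet) ∧
    List.Pairwise (· ≠ ·) [K1, K2, K3, K4] ∧
    (∀ F : Set BFun, IsClone F → CtblClosed F → finRes F = TMeet →
      F = K1 ∨ F = K2 ∨ F = K3 ∨ F = K4) ∧
    (∀ F : Set BFun, IsClone F → finRes F = TMeet →
      F = K1 ∨ F = K2 ∨ F = K3 ∨ F = K4 ∨
      (cloneGen {(⟨none, liminfF⟩ : BFun)} ⊆ F ∧ F ⊆ K1) ∨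
      (cloneGen {(⟨none, ceilLiminfF⟩ : BFun)} ⊆ F ∧ F ⊆ K2)) := by
  obtain ⟨h12, h13, h14, h23, h24, h34⟩ := K_distinct
  refine ⟨?_, ?_, ?_, ?_⟩
  · intro C hC
    simp only [List.mem_cons, List.not_mem_nil, or_false] at hC
    rcases hC with rfl | rfl | rfl | rfl
    · exact ⟨isClone_K1, ctblClosed_K1, finRes_K1⟩
    · exact ⟨isClone_K2, ctblClosed_K2, finRes_K2⟩
    · exact ⟨isClone_K3, ctblClosed_K3, finRes_K3⟩
    · exact ⟨isClone_K4, ctblClosed_K4, finRes_K4⟩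
  · refine List.Pairwise.cons ?_ (List.Pairwise.cons ?_ (List.Pairwise.cons ?_
      (List.Pairwise.cons ?_ List.Pairwise.nil)))
    · intro b hb
      simp only [List.mem_cons, List.not_mem_nil, or_false] at hb
      rcases hb with rfl | rfl | rfl
      exacts [h12, h13, h14]
    · intro b hb
      simp only [List.mem_cons, List.not_mem_nil, or_false] at hb
      rcases hb with rfl | rfl
      exacts [h23, h24]
    · intro b hb
      simp only [List.mem_cons, List.not_mem_nil, or_false] at hb
      rcases hb with rfl
      exact h34
    · intro b hb
      exact absurd hb List.not_mem_nil
  · intro F hF hCC hfin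
    rcases classify hF hfin with h3 | h4 | ⟨hlim, hsub⟩ | ⟨hceil, hsub, hA⟩
    · exact Or.inr (Or.inr (Or.inl h3))
    · exact Or.inr (Or.inr (Or.inr h4))
    · exact Or.inl (F_eq_K1 hF hfin hCC hlim hsub)
    · exact Or.inr (Or.inl (F_eq_K2 hF hfin hCC hceil hA hsub))
  · intro F hF hfin
    rcases classify hF hfin with h3 | h4 | ⟨hlim, hsub⟩ | ⟨hceil, hsub, hA⟩
    · exact Or.inr (Or.inr (Or.inl h3))
    · exact Or.inr (Or.inr (Or.inr (Or.inl h4)))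
    · exact Or.inr (Or.inr (Or.inr (Or.inr (Or.inl
        ⟨cloneGen_singleton_subset hF hlim, hsub⟩))))
    · exact Or.inr (Or.inr (Or.inr (Or.inr (Or.inr
        ⟨cloneGen_singleton_subset hF hceil, hsub⟩))))
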